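/- arXiv:2010.06129 — 2 statements merged into one kernel-verified Lean document; each statement's English description precedes it below -/
import Mathlib

section
/- Let C be a positive number with C ≥ √r·|α|. For any h_1,h_2∈ℋ(f,e) such that |f|_{h_1} ≤ C and |f|_{h_2} ≤ C, one has |α|^{2r}·(C+1)^{−4r} ≤ |e_i|_{h_1}/|e_i|_{h_2} ≤ |α|^{−2r}·(C+1)^{4r} for every i=0,…,r−1. -/
structure HermMetric (r : ℕ) {V : Type*} [AddCommGroup V] [Module ℂ V]
    (e : Module.Basis (Fin r) ℂ V) (h : V → V → ℂ) : Prop where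
  add_left : ∀ x y z : V, h (x + y) z = h x z + h y z
  smul_left : ∀ (c : ℂ) (x y : V), h (c • x) y = (starRingEnd ℂ) c * h x y
  conj_symm : ∀ x y : V, h y x = (starRingEnd ℂ) (h x y)
  pos_def : ∀ x : V, x ≠ 0 → 0 < (h x x).re
  orthogonal : ∀ i j : Fin r, i ≠ j → h (e i) (e j) = 0
  prod_one : ∏ i : Fin r, h (e i) (e i) = 1

/-!
Write `λᵢ = |eᵢ|²` for one of the two metrics. The bound `|f| ≤ C` gives `λᵢ₊₁ ≤ C² λᵢ` along the
shift and `|α|^{2r} λ₀ ≤ C² λᵣ₋₁` across the wrap-around. Walking from `eᵢ` to `eⱼ` through the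
wrap-around takes fewer than `2r` steps, so `λᵢ ≤ A λⱼ` for all `i, j` with
`A = (C+1)^{4r} / |α|^{2r}`. Since `∏ λᵢ = 1`, every `λᵢ` lies in `[A⁻¹, A]`, and hence so does
the ratio of `|eᵢ|` for two such metrics.
-/

open Finset

theorem mem_Icc_inv_of_le_mul_of_prod_eq_one {ι : Type*} [Fintype ι] {u : ι → ℝ} {A : ℝ}
    (hpos : ∀ i, 0 < u i) (hprod : ∏ i, u i = 1) (hle : ∀ i j, u i ≤ A * u j) (i : ι) :
    u i ∈ Set.Icc A⁻¹ A := by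
  have hcard : Fintype.card ι ≠ 0 := Fintype.card_pos_iff.mpr ⟨i⟩ |>.ne'
  have hA : 1 ≤ A := (le_mul_iff_one_le_left (hpos i)).mp (hle i i)
  have hA₀ : 0 ≤ A := zero_le_one.trans hA
  constructor
  · have : 1 ≤ (A * u i) ^ Fintype.card ι := calc
      1 = ∏ j, u j := hprod.symm
      _ ≤ ∏ _j : ι, A * u i := prod_le_prod (fun j _ ↦ (hpos j).le) (fun j _ ↦ hle j i)
      _ = (A * u i) ^ Fintype.card ι := by rw [prod_const, card_univ]
    rw [one_le_pow_iff_of_nonneg (by positivity [hpos i]) hcard] at this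
    rwa [inv_le_iff_one_le_mul₀ (by linarith), mul_comm]
  · refine le_of_pow_le_pow_left₀ hcard hA₀ ?_
    calc u i ^ Fintype.card ι = ∏ _j : ι, u i := by rw [prod_const, card_univ]
      _ ≤ ∏ j, A * u j := prod_le_prod (fun _ _ ↦ (hpos i).le) (fun j _ ↦ hle i j)
      _ = A ^ Fintype.card ι := by rw [prod_mul_distrib, hprod, mul_one, prod_const, card_univ]

theorem sqrt_div_sqrt_mem_Icc_inv {x y A : ℝ} (hy₀ : 0 < y) (hx : x ∈ Set.Icc A⁻¹ A)
    (hy : y ∈ Set.Icc A⁻¹ A) : √x / √y ∈ Set.Icc A⁻¹ A := by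
  obtain ⟨hx₁, hx₂⟩ := hx
  obtain ⟨hy₁, hy₂⟩ := hy
  have hA : 0 < A := hy₀.trans_le hy₂
  rw [← Real.sqrt_div' _ hy₀.le]
  constructor
  · rw [Real.le_sqrt' (inv_pos.mpr hA), le_div_iff₀ hy₀]
    calc A⁻¹ ^ 2 * y ≤ A⁻¹ ^ 2 * A := by gcongr
      _ = A⁻¹ := by field_simp
      _ ≤ x := hx₁
  · rw [Real.sqrt_le_left hA.le, div_le_iff₀ hy₀]
    calc x ≤ A := hx₂
      _ = A ^ 2 * A⁻¹ := by field_simp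
      _ ≤ A ^ 2 * y := by gcongr

section Shift

variable {r : ℕ} {u : Fin r → ℝ} {c : ℝ}

theorem le_pow_mul_of_succ_le (hc : 0 ≤ c)
    (hstep : ∀ (i : Fin r) (h : (i : ℕ) + 1 < r), u ⟨i + 1, h⟩ ≤ c * u i) (j : Fin r) :
    ∀ (n : ℕ) (h : (j : ℕ) + n < r), u ⟨j + n, h⟩ ≤ c ^ n * u j
  | 0, _ => by simp
  | n + 1, h => calc
      u ⟨j + (n + 1), h⟩ ≤ c * u ⟨j + n, by omega⟩ := hstep ⟨j + n, by omega⟩ h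
      _ ≤ c * (c ^ n * u j) := by gcongr; exact le_pow_mul_of_succ_le hc hstep j n (by omega)
      _ = c ^ (n + 1) * u j := by ring

theorem le_pow_div_mul_of_cyclic (hr : 0 < r) {a : ℝ} (ha : 0 < a) (hc : 0 ≤ c)
    (hstep : ∀ (i : Fin r) (h : (i : ℕ) + 1 < r), u ⟨i + 1, h⟩ ≤ c * u i)
    (hwrap : a * u ⟨0, hr⟩ ≤ c * u ⟨r - 1, Nat.sub_lt hr Nat.one_pos⟩) (i j : Fin r) :
    u i ≤ c ^ ((i : ℕ) + r - j) / a * u j := by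
  have hfirst : u i ≤ c ^ (i : ℕ) * u ⟨0, hr⟩ := by
    simpa using le_pow_mul_of_succ_le hc hstep ⟨0, hr⟩ i (by simp)
  have hlast : u ⟨r - 1, Nat.sub_lt hr Nat.one_pos⟩ ≤ c ^ (r - 1 - j) * u j := by
    have := le_pow_mul_of_succ_le hc hstep j (r - 1 - j) (by omega)
    simpa only [show (j : ℕ) + (r - 1 - j) = r - 1 by omega] using this
  have hwrap' : u ⟨0, hr⟩ ≤ c / a * u ⟨r - 1, Nat.sub_lt hr Nat.one_pos⟩ := by
    rw [div_mul_eq_mul_div, le_div_iff₀ ha, mul_comm]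
    exact hwrap
  calc u i ≤ c ^ (i : ℕ) * (c / a * (c ^ (r - 1 - j) * u j)) := by
        refine hfirst.trans ?_
        gcongr
        exact hwrap'.trans (by gcongr)
    _ = c ^ ((i : ℕ) + r - j) / a * u j := by
        rw [show (i : ℕ) + r - j = i + 1 + (r - 1 - j) by omega, pow_add, pow_succ]
        ring

end Shift

namespace HermMetric

variable {r : ℕ} {V : Type*} [AddCommGroup V] [Module ℂ V] {e : Module.Basis (Fin r) ℂ V}
  {h : V → V → ℂ}

theorem ofReal_re_self (hh : HermMetric r e h) (x : V) : ((h x x).re : ℂ) = h x x :=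
  Complex.conj_eq_iff_re.mp (hh.conj_symm x x).symm

theorem re_smul_self (hh : HermMetric r e h) (a : ℂ) (x : V) :
    (h (a • x) (a • x)).re = ‖a‖ ^ 2 * (h x x).re := by
  rw [hh.smul_left, hh.conj_symm, hh.smul_left, ← hh.ofReal_re_self, map_mul, Complex.conj_conj,
    Complex.conj_ofReal, ← mul_assoc, ← Complex.normSq_eq_conj_mul_self, ← Complex.ofReal_mul,
    Complex.ofReal_re, Complex.ofReal_re, Complex.normSq_eq_norm_sq]

theorem re_self_basis_pos (hh : HermMetric r e h) (i : Fin r) : 0 < (h (e i) (e i)).re :=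
  hh.pos_def (e i) (e.ne_zero i)

theorem prod_re_self_basis (hh : HermMetric r e h) : ∏ i, (h (e i) (e i)).re = 1 := by
  apply Complex.ofReal_injective
  push_cast
  simp only [hh.ofReal_re_self]
  exact hh.prod_one

theorem re_self_basis_le_mul (hh : HermMetric r e h) (hr : 0 < r) {α : ℂ} (hα : α ≠ 0)
    {f : V →ₗ[ℂ] V}
    (hf : ∀ (i : Fin r) (h : (i : ℕ) + 1 < r), f (e i) = e ⟨(i : ℕ) + 1, h⟩)
    (hlast : f (e ⟨r - 1, Nat.sub_lt hr Nat.one_pos⟩) = α ^ r • e ⟨0, hr⟩)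
    {C : ℝ} (hC : 0 ≤ C) (hfC : ∀ x : V, (h (f x) (f x)).re ≤ C ^ 2 * (h x x).re)
    (i j : Fin r) :
    (h (e i) (e i)).re ≤ (C + 1) ^ (4 * r) / ‖α‖ ^ (2 * r) * (h (e j) (e j)).re := by
  have hcycle := le_pow_div_mul_of_cyclic (u := fun i ↦ (h (e i) (e i)).re) hr
    (a := ‖α‖ ^ (2 * r)) (by positivity) (sq_nonneg C)
    (fun i hi ↦ by simpa only [hf i hi] using hfC (e i))
    (by simpa only [hlast, hh.re_smul_self, norm_pow, ← pow_mul, mul_comm r 2]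
      using hfC (e ⟨r - 1, Nat.sub_lt hr Nat.one_pos⟩)) i j
  refine hcycle.trans ?_
  gcongr
  · exact (hh.re_self_basis_pos j).le
  rw [← pow_mul]
  calc C ^ (2 * ((i : ℕ) + r - j)) ≤ (C + 1) ^ (2 * ((i : ℕ) + r - j)) := by gcongr; linarith
    _ ≤ (C + 1) ^ (4 * r) := pow_le_pow_right₀ (by linarith) (by omega)

end HermMetric

theorem basis_norm_ratio_bounds_general
    (r : ℕ) (hr : 0 < r) (V : Type*) [AddCommGroup V] [Module ℂ V]
    (e : Module.Basis (Fin r) ℂ V) (α : ℂ) (hα : α ≠ 0)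
    (f : V →ₗ[ℂ] V)
    (hf : ∀ (i : Fin r) (h : (i : ℕ) + 1 < r), f (e i) = e ⟨(i : ℕ) + 1, h⟩)
    (hlast : f (e ⟨r - 1, Nat.sub_lt hr Nat.one_pos⟩) = α ^ r • e ⟨0, hr⟩)
    (C : ℝ) (hCpos : 0 < C)
    (h₁ h₂ : V → V → ℂ) (hMet₁ : HermMetric r e h₁) (hMet₂ : HermMetric r e h₂)
    (hfC₁ : ∀ x : V, (h₁ (f x) (f x)).re ≤ C ^ 2 * (h₁ x x).re)
    (hfC₂ : ∀ x : V, (h₂ (f x) (f x)).re ≤ C ^ 2 * (h₂ x x).re) :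
    ∀ i : Fin r,
      ‖α‖ ^ (2 * (r : ℝ)) * (C + 1) ^ (-(4 * (r : ℝ))) ≤
        Real.sqrt (h₁ (e i) (e i)).re / Real.sqrt (h₂ (e i) (e i)).re ∧
      Real.sqrt (h₁ (e i) (e i)).re / Real.sqrt (h₂ (e i) (e i)).re ≤
        ‖α‖ ^ (-(2 * (r : ℝ))) * (C + 1) ^ (4 * (r : ℝ)) := by
  intro i
  have hbounds {h : V → V → ℂ} (hh : HermMetric r e h)
      (hfC : ∀ x : V, (h (f x) (f x)).re ≤ C ^ 2 * (h x x).re) :=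
    mem_Icc_inv_of_le_mul_of_prod_eq_one hh.re_self_basis_pos hh.prod_re_self_basis
      (hh.re_self_basis_le_mul hr hα hf hlast hCpos.le hfC) i
  have hratio := sqrt_div_sqrt_mem_Icc_inv (hMet₂.re_self_basis_pos i)
    (hbounds hMet₁ hfC₁) (hbounds hMet₂ hfC₂)
  rw [Real.rpow_neg (norm_nonneg α), Real.rpow_neg (by linarith),
    show 2 * (r : ℝ) = (2 * r : ℕ) by push_cast; rfl,
    show 4 * (r : ℝ) = (4 * r : ℕ) by push_cast; rfl,
    Real.rpow_natCast, Real.rpow_natCast]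
  rwa [Set.mem_Icc, inv_div, div_eq_mul_inv (‖α‖ ^ _), div_eq_inv_mul ((C + 1) ^ _)] at hratio

/-- comparison of the norms of basis vectors for two metrics whose
operator norms of `f` are bounded by `C`. -/
theorem basis_norm_ratio_bounds
    (r : ℕ) (hr : 0 < r) (V : Type*) [AddCommGroup V] [Module ℂ V]
    (e : Module.Basis (Fin r) ℂ V) (α : ℂ) (hα : α ≠ 0)
    (f : V →ₗ[ℂ] V)
    (hf : ∀ (i : Fin r) (h : (i : ℕ) + 1 < r), f (e i) = e ⟨(i : ℕ) + 1, h⟩)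
    (hlast : f (e ⟨r - 1, Nat.sub_lt hr Nat.one_pos⟩) = α ^ r • e ⟨0, hr⟩)
    (C : ℝ) (hCpos : 0 < C) (hC : Real.sqrt r * ‖α‖ ≤ C)
    (h₁ h₂ : V → V → ℂ) (hMet₁ : HermMetric r e h₁) (hMet₂ : HermMetric r e h₂)
    (hfC₁ : ∀ x : V, (h₁ (f x) (f x)).re ≤ C ^ 2 * (h₁ x x).re)
    (hfC₂ : ∀ x : V, (h₂ (f x) (f x)).re ≤ C ^ 2 * (h₂ x x).re) :
    ∀ i : Fin r,
      ‖α‖ ^ (2 * (r : ℝ)) * (C + 1) ^ (-(4 * (r : ℝ))) ≤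
        Real.sqrt (h₁ (e i) (e i)).re / Real.sqrt (h₂ (e i) (e i)).re ∧
      Real.sqrt (h₁ (e i) (e i)).re / Real.sqrt (h₂ (e i) (e i)).re ≤
        ‖α‖ ^ (-(2 * (r : ℝ))) * (C + 1) ^ (4 * (r : ℝ)) :=
  basis_norm_ratio_bounds_general r hr V e α hα f hf hlast C hCpos h₁ h₂ hMet₁ hMet₂ hfC₁ hfC₂
end

section
/- Assume r>1 and let 0≤ε≤1. Let h∈ℋ(f,e); by G_r-invariance the value b(h):=h(v_i,v_i) is independent of i. Suppose |h(v_i,v_j)| ≤ ε·b(h) for all i≠j. Let 0<δ<1 satisfy (r−1)ε<δ, and set C_δ=(1−δ)^{−1}(r−1). Then |log(b(h)/b(h_can))| ≤ C_δ·ε, and for every j=0,…,r−1 one has |log(h(e_j,e_j)/h_can(e_j,e_j))| ≤ 2C_δ·ε. -/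
/-!
Write `H_m = h(e_m, e_m)` and `w_m = H_m / |α|^{2m}`. Since `e` is `h`-orthogonal, the Gram
matrix of the eigenbasis is circulant, `h(v_i, v_j) = ∑_m τ^{(i-j)m} w_m`; in particular
`b = ∑_m w_m`, and discrete Fourier inversion gives `r w_k = ∑_j τ^{jk} h(v_0, v_j)`. All terms
with `j ≠ 0` are at most `ε b`, so `x_k := r w_k / b` satisfies `|x_k - 1| ≤ (r-1)ε < δ`, hence
`|log x_k| ≤ C_δ ε`. For `h_can` all weights equal `b(h_can)/r`, so
`H_k / H_can,k = x_k · b / b(h_can)`. Both metrics have determinant one, so the logarithms of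
these ratios sum to zero: `log (b / b(h_can))` is minus the mean of the `log x_k`, which gives
both bounds.
-/

open ComplexConjugate

namespace HermMetric

variable {r : ℕ} {V : Type*} [AddCommGroup V] [Module ℂ V] {e : Module.Basis (Fin r) ℂ V}
  {h : V → V → ℂ}

lemma sum_left (hm : HermMetric r e h) {ι : Type*} (s : Finset ι) (x : ι → V) (y : V) :
    h (∑ i ∈ s, x i) y = ∑ i ∈ s, h (x i) y :=
  map_sum (AddMonoidHom.mk' (h · y) (hm.add_left · · y)) x s

lemma smul_right (hm : HermMetric r e h) (c : ℂ) (x y : V) : h x (c • y) = c * h x y := by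
  rw [hm.conj_symm, hm.smul_left, map_mul, Complex.conj_conj, ← hm.conj_symm]

lemma sum_right (hm : HermMetric r e h) {ι : Type*} (s : Finset ι) (x : V) (y : ι → V) :
    h x (∑ i ∈ s, y i) = ∑ i ∈ s, h x (y i) := by
  rw [hm.conj_symm, hm.sum_left, map_sum]
  exact Finset.sum_congr rfl fun i _ => (hm.conj_symm _ _).symm

lemma ofReal_re_apply_self (hm : HermMetric r e h) (x : V) : ((h x x).re : ℂ) = h x x :=
  Complex.conj_eq_iff_re.mp (hm.conj_symm x x).symm

lemma apply_sum_smul_basis (hm : HermMetric r e h) (a b : Fin r → ℂ) :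
    h (∑ j, a j • e j) (∑ j, b j • e j) = ∑ m, conj (a m) * b m * h (e m) (e m) := by
  rw [hm.sum_left]
  refine Finset.sum_congr rfl fun m _ => ?_
  rw [hm.smul_left, hm.sum_right, Finset.sum_eq_single m (fun n _ hn => ?_) (by simp),
    hm.smul_right]
  · ring
  · rw [hm.smul_right, hm.orthogonal m n hn.symm, mul_zero]

lemma prod_re_apply_basis (hm : HermMetric r e h) : ∏ i, (h (e i) (e i)).re = 1 := by
  have := hm.prod_one
  rw [← Finset.prod_congr rfl fun i _ => hm.ofReal_re_apply_self (e i)] at this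
  exact_mod_cast this

lemma re_apply_basis_pos (hm : HermMetric r e h) (i : Fin r) : 0 < (h (e i) (e i)).re :=
  hm.pos_def _ (e.ne_zero i)

end HermMetric

theorem IsPrimitiveRoot.sum_zpow_mul_sub_eq {K : Type*} [Field K] {τ : K} {r : ℕ}
    (hτ : IsPrimitiveRoot τ r) (k m : Fin r) :
    ∑ j : Fin r, τ ^ (((j : ℕ) : ℤ) * (((k : ℕ) : ℤ) - m)) = if k = m then (r : K) else 0 := by
  split_ifs with hkm
  · simp [hkm]
  have hne : τ ^ (((k : ℕ) : ℤ) - m) ≠ 1 := by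
    rw [Ne, hτ.zpow_eq_one_iff_dvd]
    intro hdvd
    have := Int.eq_zero_of_abs_lt_dvd hdvd (by rw [abs_lt]; omega)
    exact hkm (Fin.ext (by omega))
  have hpow : (τ ^ (((k : ℕ) : ℤ) - m)) ^ r = 1 := by
    rw [← zpow_natCast, ← zpow_mul, mul_comm, zpow_mul, zpow_natCast, hτ.pow_eq_one, one_zpow]
  simp_rw [mul_comm ((_ : ℕ) : ℤ), zpow_mul, zpow_natCast]
  rw [Fin.sum_univ_eq_sum_range (fun j => (τ ^ (((k : ℕ) : ℤ) - m)) ^ j), geom_sum_eq hne, hpow,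
    sub_self, zero_div]

theorem IsPrimitiveRoot.sum_zpow_mul_sum_zpow_neg_mul {K : Type*} [Field K] {τ : K} {r : ℕ}
    (hτ : IsPrimitiveRoot τ r) (w : Fin r → K) (k : Fin r) :
    ∑ j : Fin r, τ ^ (((j : ℕ) : ℤ) * (k : ℕ)) * ∑ m : Fin r, τ ^ (-((j : ℕ) : ℤ) * (m : ℕ)) * w m
      = r * w k := by
  have hτ0 : τ ≠ 0 := hτ.ne_zero k.pos.ne'
  have hexp : ∀ j m : Fin r, τ ^ (((j : ℕ) : ℤ) * (k : ℕ)) * (τ ^ (-((j : ℕ) : ℤ) * (m : ℕ)) * w m)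
      = τ ^ (((j : ℕ) : ℤ) * (((k : ℕ) : ℤ) - m)) * w m := by
    intro j m
    rw [← mul_assoc, ← zpow_add₀ hτ0]
    ring_nf
  simp_rw [Finset.mul_sum, hexp]
  rw [Finset.sum_comm]
  simp_rw [← Finset.sum_mul, hτ.sum_zpow_mul_sub_eq, ite_mul, zero_mul]
  simp

section Eigenbasis

variable {r : ℕ} {V : Type*} [AddCommGroup V] [Module ℂ V]

noncomputable def eigvec (e : Module.Basis (Fin r) ℂ V) (τ α : ℂ) (i : Fin r) : V :=
  ∑ j : Fin r, (τ ^ (-((i : ℕ) : ℤ) * ((j : ℕ) : ℤ)) * α ^ (-((j : ℕ) : ℤ))) • e j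

noncomputable def diagWeight (e : Module.Basis (Fin r) ℂ V) (h : V → V → ℂ) (α : ℂ)
    (m : Fin r) : ℝ :=
  (h (e m) (e m)).re / Complex.normSq α ^ (m : ℕ)

variable {e : Module.Basis (Fin r) ℂ V} {h : V → V → ℂ}

lemma diagWeight_pos (hm : HermMetric r e h) {α : ℂ} (hα : α ≠ 0) (m : Fin r) :
    0 < diagWeight e h α m :=
  div_pos (hm.re_apply_basis_pos m) (pow_pos (Complex.normSq_pos.mpr hα) _)

lemma diagWeight_div_diagWeight {h' : V → V → ℂ} {α : ℂ} (hα : α ≠ 0) (m : Fin r) :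
    diagWeight e h α m / diagWeight e h' α m = (h (e m) (e m)).re / (h' (e m) (e m)).re :=
  div_div_div_cancel_right₀ (pow_ne_zero _ (Complex.normSq_pos.mpr hα).ne') _ _

lemma diagWeight_eq_of_apply_basis {α : ℂ} (hα : α ≠ 0) {n : ℤ} {m : Fin r}
    (hval : h (e m) (e m) = ((‖α‖ ^ (n + 2 * ((m : ℕ) : ℤ)) : ℝ) : ℂ)) :
    diagWeight e h α m = ‖α‖ ^ n := by
  have hα' : ‖α‖ ≠ 0 := norm_ne_zero_iff.mpr hα
  rw [diagWeight, hval, Complex.ofReal_re, Complex.normSq_eq_norm_sq, zpow_add₀ hα', zpow_mul,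
    zpow_ofNat, zpow_natCast, ← pow_mul, mul_div_cancel_right₀ _ (pow_ne_zero _ hα')]

lemma HermMetric.apply_eigvec (hm : HermMetric r e h) {τ : ℂ} (hτ : ‖τ‖ = 1) (α : ℂ)
    (i j : Fin r) :
    h (eigvec e τ α i) (eigvec e τ α j)
      = ∑ m : Fin r, τ ^ ((((i : ℕ) : ℤ) - (j : ℕ)) * (m : ℕ)) * diagWeight e h α m := by
  have hτ0 : τ ≠ 0 := norm_ne_zero_iff.mp (by rw [hτ]; exact one_ne_zero)
  have hconj : conj τ = τ⁻¹ := (Complex.inv_eq_conj hτ).symm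
  rw [eigvec, eigvec, hm.apply_sum_smul_basis]
  refine Finset.sum_congr rfl fun m _ => ?_
  have hnormSq : conj (α ^ (-((m : ℕ) : ℤ))) * α ^ (-((m : ℕ) : ℤ))
      = ((Complex.normSq α ^ (m : ℕ))⁻¹ : ℝ) := by
    rw [← Complex.normSq_eq_conj_mul_self, map_zpow₀, zpow_neg, zpow_natCast]
  rw [diagWeight, Complex.ofReal_div, hm.ofReal_re_apply_self, map_mul, map_zpow₀, hconj,
    inv_zpow', sub_mul, zpow_sub₀ hτ0, div_eq_mul_inv, ← zpow_neg]
  calc _ = τ ^ (-(-((i : ℕ) : ℤ) * (m : ℕ))) * τ ^ (-((j : ℕ) : ℤ) * (m : ℕ))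
        * (conj (α ^ (-((m : ℕ) : ℤ))) * α ^ (-((m : ℕ) : ℤ))) * h (e m) (e m) := by ring
    _ = _ := by rw [hnormSq]; push_cast; ring_nf

lemma HermMetric.apply_eigvec_self (hm : HermMetric r e h) {τ : ℂ} (hτ : ‖τ‖ = 1) (α : ℂ)
    (i : Fin r) : h (eigvec e τ α i) (eigvec e τ α i) = ∑ m : Fin r, diagWeight e h α m := by
  simp [hm.apply_eigvec hτ]

lemma HermMetric.abs_card_mul_diagWeight_sub_le [NeZero r] (hm : HermMetric r e h)
    {τ : ℂ} (hτ : IsPrimitiveRoot τ r) (α : ℂ) {ε b : ℝ}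
    (hb : h (eigvec e τ α 0) (eigvec e τ α 0) = b)
    (hεb : ∀ j, j ≠ 0 → ‖h (eigvec e τ α 0) (eigvec e τ α j)‖ ≤ ε * b) (k : Fin r) :
    |r * diagWeight e h α k - b| ≤ (r - 1) * ε * b := by
  have hτ1 : ‖τ‖ = 1 := hτ.norm'_eq_one (NeZero.ne r)
  set S := fun j : Fin r => τ ^ (((j : ℕ) : ℤ) * (k : ℕ)) * h (eigvec e τ α 0) (eigvec e τ α j)
  have hinv : ∑ j, S j = r * diagWeight e h α k := by
    simp only [S, hm.apply_eigvec hτ1, Fin.val_zero, Nat.cast_zero, zero_sub]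
    exact hτ.sum_zpow_mul_sum_zpow_neg_mul _ k
  have hsplit : ((r * diagWeight e h α k - b : ℝ) : ℂ) = ∑ j ∈ Finset.univ.erase 0, S j := by
    rw [← Finset.sum_erase_add _ _ (Finset.mem_univ 0)] at hinv
    simp only [S, Fin.val_zero, Nat.cast_zero, zero_mul, zpow_zero, one_mul, hb] at hinv
    push_cast
    rw [← hinv, add_sub_cancel_right]
  calc |r * diagWeight e h α k - b| = ‖∑ j ∈ Finset.univ.erase 0, S j‖ := by
        rw [← hsplit, Complex.norm_real, Real.norm_eq_abs]
    _ ≤ ∑ j ∈ Finset.univ.erase 0, ‖S j‖ := norm_sum_le _ _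
    _ ≤ ∑ _j ∈ Finset.univ.erase (0 : Fin r), ε * b := by
        refine Finset.sum_le_sum fun j hj => ?_
        rw [norm_mul, norm_zpow, hτ1, one_zpow, one_mul]
        exact hεb j (Finset.ne_of_mem_erase hj)
    _ = (r - 1) * ε * b := by
        rw [Finset.sum_const, Finset.card_erase_of_mem (Finset.mem_univ _), Finset.card_univ,
          Fintype.card_fin, nsmul_eq_mul, Nat.cast_sub NeZero.one_le, Nat.cast_one, mul_assoc]

end Eigenbasis

theorem Real.abs_log_le_of_abs_sub_one_le {x t δ : ℝ} (hδ : δ < 1) (htδ : t < δ)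
    (hx : |x - 1| ≤ t) : |log x| ≤ t / (1 - δ) := by
  obtain ⟨hlo, hhi⟩ := abs_le.mp hx
  have ht : 0 ≤ t := (abs_nonneg _).trans hx
  have hδ' : 0 < 1 - δ := by linarith
  have hx0 : 0 < x := by linarith
  refine abs_le.mpr ⟨?_, ?_⟩
  · calc -(t / (1 - δ)) ≤ -(t / x) := neg_le_neg (div_le_div_of_nonneg_left ht hδ' (by linarith))
      _ = -t / x := (neg_div _ _).symm
      _ ≤ (x - 1) / x := div_le_div_of_nonneg_right hlo hx0.le
      _ = 1 - x⁻¹ := by field_simp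
      _ ≤ log x := one_sub_inv_le_log_of_pos hx0
  · calc log x ≤ x - 1 := log_le_sub_one_of_pos hx0
      _ ≤ t := hhi
      _ ≤ t / (1 - δ) := le_div_self ht hδ' (by linarith)

theorem abs_log_le_of_prod_eq_one {ι : Type*} [Fintype ι] [Nonempty ι] {ρ x : ι → ℝ} {s B : ℝ}
    (hρ : ∏ i, ρ i = 1) (hx : ∀ i, 0 < x i) (hs : 0 < s) (hρx : ∀ i, ρ i = x i * s)
    (hB : ∀ i, |Real.log (x i)| ≤ B) :
    |Real.log s| ≤ B ∧ ∀ i, |Real.log (ρ i)| ≤ 2 * B := by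
  have hlog : ∀ i, Real.log (ρ i) = Real.log (x i) + Real.log s := fun i => by
    rw [hρx, Real.log_mul (hx i).ne' hs.ne']
  have hsum : ∑ i, Real.log (x i) = -(Fintype.card ι * Real.log s) := by
    have h0 : ∑ i, Real.log (ρ i) = 0 := by
      rw [← Real.log_prod fun i _ => (hρx i).symm ▸ (mul_pos (hx i) hs).ne', hρ, Real.log_one]
    simp only [hlog, Finset.sum_add_distrib, Finset.sum_const, Finset.card_univ,
      nsmul_eq_mul] at h0
    linarith
  have hcard : (0 : ℝ) < Fintype.card ι := by exact_mod_cast Fintype.card_pos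
  have hs' : |Real.log s| ≤ B := by
    refine le_of_mul_le_mul_left ?_ hcard
    calc Fintype.card ι * |Real.log s| = |∑ i, Real.log (x i)| := by
          rw [hsum, abs_neg, abs_mul, abs_of_pos hcard]
      _ ≤ ∑ i, |Real.log (x i)| := Finset.abs_sum_le_sum_abs _ _
      _ ≤ ∑ _i : ι, B := Finset.sum_le_sum fun i _ => hB i
      _ = Fintype.card ι * B := by simp
  refine ⟨hs', fun i => ?_⟩
  calc |Real.log (ρ i)| ≤ |Real.log (x i)| + |Real.log s| := hlog i ▸ abs_add_le _ _
    _ ≤ 2 * B := by linarith [hB i]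

theorem eps_orthogonal_close_to_hcan_general
    (r : ℕ) (hr : 1 < r) (V : Type*) [AddCommGroup V] [Module ℂ V]
    (e : Module.Basis (Fin r) ℂ V) (α : ℂ) (hα : α ≠ 0)
    (τ : ℂ) (hτ : τ = Complex.exp (2 * Real.pi * Complex.I / r))
    (v : Fin r → V)
    (hv : ∀ i : Fin r, v i =
      ∑ j : Fin r, (τ ^ (-((i : ℕ) : ℤ) * ((j : ℕ) : ℤ)) * α ^ (-((j : ℕ) : ℤ))) • e j)
    (hcan : V → V → ℂ) (hcanMet : HermMetric r e hcan)
    (hcanVal : ∀ j : Fin r,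
      hcan (e j) (e j) = ((‖α‖ ^ (-((r : ℤ) - 1) + 2 * ((j : ℕ) : ℤ)) : ℝ) : ℂ))
    (bcan : ℝ) (hbcan : ∀ i : Fin r, hcan (v i) (v i) = (bcan : ℂ))
    (h : V → V → ℂ) (hMet : HermMetric r e h)
    (ε : ℝ)
    (b : ℝ) (hb : ∀ i : Fin r, h (v i) (v i) = (b : ℂ))
    (hεb : ∀ i j : Fin r, i ≠ j → ‖h (v i) (v j)‖ ≤ ε * b)
    (δ : ℝ) (hδ1 : δ < 1) (hδε : ((r : ℝ) - 1) * ε < δ)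
    (Cδ : ℝ) (hCδ : Cδ = (1 - δ)⁻¹ * ((r : ℝ) - 1)) :
    |Real.log (b / bcan)| ≤ Cδ * ε ∧
    ∀ j : Fin r,
      |Real.log ((h (e j) (e j)).re / (hcan (e j) (e j)).re)| ≤ 2 * Cδ * ε := by
  have : NeZero r := ⟨by omega⟩
  have hτr : IsPrimitiveRoot τ r := hτ ▸ Complex.isPrimitiveRoot_exp r (NeZero.ne r)
  have hτ1 : ‖τ‖ = 1 := hτr.norm'_eq_one (NeZero.ne r)
  obtain rfl : v = eigvec e τ α := funext hv
  set κ := ‖α‖ ^ (-((r : ℤ) - 1))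
  have hwcan : ∀ k, diagWeight e hcan α k = κ := fun k =>
    diagWeight_eq_of_apply_basis hα (hcanVal k)
  have hbcan' : bcan = r * κ := by
    have := (hbcan 0).symm.trans (hcanMet.apply_eigvec_self hτ1 α 0)
    simp only [hwcan, Finset.sum_const, Finset.card_univ, Fintype.card_fin, nsmul_eq_mul] at this
    exact_mod_cast this
  have hb' : b = ∑ m, diagWeight e h α m := by
    exact_mod_cast (hb 0).symm.trans (hMet.apply_eigvec_self hτ1 α 0)
  have hb0 : 0 < b :=
    hb' ▸ Finset.sum_pos (fun m _ => diagWeight_pos hMet hα m) Finset.univ_nonempty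
  have hbcan0 : 0 < bcan := hbcan' ▸ mul_pos (by positivity) (zpow_pos (norm_pos_iff.mpr hα) _)
  have hx : ∀ k, |Real.log (r * diagWeight e h α k / b)| ≤ Cδ * ε := fun k => by
    rw [hCδ, mul_assoc, inv_mul_eq_div]
    refine Real.abs_log_le_of_abs_sub_one_le hδ1 hδε ?_
    rw [div_sub_one hb0.ne', abs_div, abs_of_pos hb0, div_le_iff₀ hb0]
    exact hMet.abs_card_mul_diagWeight_sub_le hτr α (hb 0) (fun j hj => hεb 0 j hj.symm) k
  have hρ : ∀ k, (h (e k) (e k)).re / (hcan (e k) (e k)).re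
      = r * diagWeight e h α k / b * (b / bcan) := fun k => by
    rw [← diagWeight_div_diagWeight hα, hwcan, hbcan']
    field_simp
  have hprod : ∏ k, (h (e k) (e k)).re / (hcan (e k) (e k)).re = 1 := by
    rw [Finset.prod_div_distrib, hMet.prod_re_apply_basis, hcanMet.prod_re_apply_basis, div_one]
  obtain ⟨hlog_b, hlog_diag⟩ := abs_log_le_of_prod_eq_one hprod
    (fun k => div_pos (mul_pos (by positivity) (diagWeight_pos hMet hα k)) hb0)
    (div_pos hb0 hbcan0) hρ hx
  exact ⟨hlog_b, fun j => mul_assoc 2 Cδ ε ▸ hlog_diag j⟩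

/-- ε-orthogonality of the eigenbasis implies that `h` is close to
`h_can`. -/
theorem eps_orthogonal_close_to_hcan
    (r : ℕ) (hr : 1 < r) (V : Type*) [AddCommGroup V] [Module ℂ V]
    (e : Module.Basis (Fin r) ℂ V) (α : ℂ) (hα : α ≠ 0)
    (τ : ℂ) (hτ : τ = Complex.exp (2 * Real.pi * Complex.I / r))
    (v : Fin r → V)
    (hv : ∀ i : Fin r, v i =
      ∑ j : Fin r, (τ ^ (-((i : ℕ) : ℤ) * ((j : ℕ) : ℤ)) * α ^ (-((j : ℕ) : ℤ))) • e j)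
    (hcan : V → V → ℂ) (hcanMet : HermMetric r e hcan)
    (hcanVal : ∀ j : Fin r,
      hcan (e j) (e j) = ((‖α‖ ^ (-((r : ℤ) - 1) + 2 * ((j : ℕ) : ℤ)) : ℝ) : ℂ))
    (bcan : ℝ) (hbcan : ∀ i : Fin r, hcan (v i) (v i) = (bcan : ℂ))
    (h : V → V → ℂ) (hMet : HermMetric r e h)
    (ε : ℝ) (hε0 : 0 ≤ ε) (hε1 : ε ≤ 1)
    (b : ℝ) (hb : ∀ i : Fin r, h (v i) (v i) = (b : ℂ))
    (hεb : ∀ i j : Fin r, i ≠ j → ‖h (v i) (v j)‖ ≤ ε * b)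
    (δ : ℝ) (hδ0 : 0 < δ) (hδ1 : δ < 1) (hδε : ((r : ℝ) - 1) * ε < δ)
    (Cδ : ℝ) (hCδ : Cδ = (1 - δ)⁻¹ * ((r : ℝ) - 1)) :
    |Real.log (b / bcan)| ≤ Cδ * ε ∧
    ∀ j : Fin r,
      |Real.log ((h (e j) (e j)).re / (hcan (e j) (e j)).re)| ≤ 2 * Cδ * ε :=
  eps_orthogonal_close_to_hcan_general r hr V e α hα τ hτ v hv hcan hcanMet hcanVal bcan hbcan h
    hMet ε b hb hεb δ hδ1 hδε Cδ hCδ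
end
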